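/- Let n and b be natural numbers with n ≥ 1 and b ≥ 2, and write s_i = (b+1)·b^(n+i) − 1. Then Ap(T_b(n), s_0) = { t_1·s_1 + t_2·s_2 + ⋯ + t_(n+1)·s_(n+1) : (t_1,…,t_(n+1)) ∈ R_b(n) }. -/

import Mathlib

/-!
Write `N = (b+1)·b^n` and `R_j = 1 + b + ⋯ + b^(j-1)`, so that `s_j = (b-1)·N·R_j + s_0`.
The tuples of `R_b(n)` are exactly the greedy expansions `t` of the integers `u < s_0` in the
numeration system with weights `R_j`, and `∑ t_j s_j ≡ (b-1)·N·u (mod s_0)` where `(b-1)·N` is a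
unit modulo `s_0`. Hence these sums meet every residue class modulo `s_0`, and since the Apéry
set has exactly one element in each class it suffices to show that every such sum `w` lies in it.
Every element of the semigroup has the form `(b-1)·N·U + s_0·C` where `(b-1)·U + C` is a sum of
`C` powers of `b`, so that its base-`b` digit sum is at most `C`. If `w - s_0` were of this form,
comparing residues would force `U = u` and `C = T - 1` with `T = ∑ t_j`, while the greedy shape
of `t` makes the digit sum of `(b-1)·u + T - 1` at least `T`.
-/

/-- The Thabit numerical semigroup base `b`: the additive submonoid of ℕ generated by
`{(b+1)·b^(n+i) − 1 : i ∈ ℕ}`. -/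
def thabitSemigroup (b n : ℕ) : AddSubmonoid ℕ :=
  AddSubmonoid.closure {m : ℕ | ∃ i : ℕ, m = (b + 1) * b ^ (n + i) - 1}

/-- `R_b(n)`: tuples `(t_1,…,t_(n+1))` with entries in `{0,…,b}` (encoded as functions
`ℕ → ℕ` supported on `{1,…,n+1}`) such that: `t_(n+1) ≤ b−1`; if `t_j = b` then `t_i = 0`
for all `i < j`; if `t_(n+1) = b−1` then `t_n ≤ b−1`; and if `t_n = t_(n+1) = b−1` then
`t_1 = ⋯ = t_(n−1) = 0`. -/
def Rb (b n : ℕ) (t : ℕ → ℕ) : Prop :=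
  (∀ j, t j ≤ b) ∧
  (∀ j, j ∉ Finset.Icc 1 (n + 1) → t j = 0) ∧
  t (n + 1) ≤ b - 1 ∧
  (∀ j, t j = b → ∀ i < j, t i = 0) ∧
  (t (n + 1) = b - 1 → t n ≤ b - 1) ∧
  (t n = b - 1 → t (n + 1) = b - 1 → ∀ i, 1 ≤ i → i ≤ n - 1 → t i = 0)

open Finset

theorem sum_Icc_one_eq_sum_range (f : ℕ → ℕ) (m : ℕ) :
    ∑ j ∈ Icc 1 m, f j = ∑ j ∈ range m, f (j + 1) := by
  induction m with
  | zero => simp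
  | succ m ih => rw [sum_Icc_succ_top (by omega), ih, sum_range_succ]

theorem sum_range_succ_mul_pow (t : ℕ → ℕ) (b m : ℕ) :
    ∑ j ∈ range (m + 1), t j * b ^ j = t 0 + b * ∑ j ∈ range m, t (j + 1) * b ^ j := by
  rw [sum_range_succ', mul_sum, add_comm]
  simp only [pow_zero, mul_one, pow_succ]
  congr 1
  exact sum_congr rfl fun j _ => by ring

theorem sum_le_sum_mul_pow {b : ℕ} (hb : 0 < b) (s : Finset ℕ) (t : ℕ → ℕ) :
    ∑ j ∈ s, t j ≤ ∑ j ∈ s, t j * b ^ j :=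
  sum_le_sum fun _ _ => Nat.le_mul_of_pos_right _ (Nat.pow_pos hb)

theorem eq_and_eq_of_mul_add_mul_eq {a m U C V T : ℕ} (hcop : Nat.Coprime a m) (hV : V < m)
    (hT : T < a) (h : a * U + m * C = a * V + m * T) : U = V ∧ C = T := by
  have hmod : U ≡ V [MOD m] := by
    refine Nat.ModEq.cancel_left_of_coprime (c := a) (Nat.coprime_comm.1 hcop) ?_
    simpa [Nat.ModEq, Nat.add_mul_mod_self_left] using congrArg (· % m) h
  obtain ⟨k, hk⟩ : ∃ k, U = V + m * k :=
    ⟨U / m, by rw [← Nat.mod_eq_of_lt hV, ← hmod, Nat.mod_add_div]⟩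
  have hkCT : a * k + C = T := by
    apply Nat.eq_of_mul_eq_mul_left (show 0 < m by omega)
    rw [hk] at h
    linarith
  have hk0 : k = 0 := by
    by_contra hk0
    have := Nat.le_mul_of_pos_right a (Nat.pos_of_ne_zero hk0)
    omega
  subst hk0
  omega

theorem exists_lt_mul_modEq {a m : ℕ} (hcop : Nat.Coprime a m) (hm : 0 < m) (s : ℕ) :
    ∃ u < m, a * u ≡ s [MOD m] := by
  rcases Nat.lt_or_ge 1 m with h1 | h1
  · obtain ⟨k, -, hk⟩ := Nat.exists_mul_mod_eq_one_of_coprime hcop h1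
    refine ⟨k * s % m, Nat.mod_lt _ hm, ?_⟩
    calc a * (k * s % m) ≡ a * (k * s) [MOD m] := (Nat.mod_modEq _ _).mul_left _
      _ = a * k * s := by ring
      _ ≡ 1 * s [MOD m] := (hk ▸ (Nat.mod_modEq (a * k) m).symm).mul_right _
      _ = s := one_mul s
  · exact ⟨0, hm, by rw [show m = 1 by omega]; exact Nat.modEq_one⟩

def aperySet (S : AddSubmonoid ℕ) (m : ℕ) : Set ℕ :=
  {s | s ∈ S ∧ ¬ ∃ t ∈ S, t + m = s}

theorem eq_of_mem_aperySet_of_modEq {S : AddSubmonoid ℕ} {m x y : ℕ} (hm : m ∈ S)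
    (hx : x ∈ aperySet S m) (hy : y ∈ aperySet S m) (hxy : x ≡ y [MOD m]) : x = y := by
  wlog hle : x ≤ y generalizing x y
  · exact (this hy hx hxy.symm (le_of_not_ge hle)).symm
  obtain ⟨k, hk⟩ := (Nat.modEq_iff_dvd' hle).1 hxy
  rcases k with _ | k
  · omega
  · have hmk : m * k ∈ S := by simpa [mul_comm] using S.nsmul_mem hm k
    refine absurd ⟨x + m * k, S.add_mem hx.1 hmk, ?_⟩ hy.2
    rw [mul_add, mul_one] at hk
    omega

def digitSum (b n : ℕ) : ℕ := (Nat.digits b n).sum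

section DigitSum

variable {b : ℕ}

theorem digitSum_eq_mod_add_digitSum_div (hb : 1 < b) (n : ℕ) :
    digitSum b n = n % b + digitSum b (n / b) := by
  rcases n.eq_zero_or_pos with rfl | hn
  · simp [digitSum]
  · simp [digitSum, Nat.digits_def' hb hn]

theorem digitSum_add_mul (hb : 1 < b) {x : ℕ} (hx : x < b) (y : ℕ) :
    digitSum b (x + b * y) = x + digitSum b y := by
  rw [digitSum_eq_mod_add_digitSum_div hb, Nat.add_mul_mod_self_left, Nat.mod_eq_of_lt hx,
    Nat.add_mul_div_left _ _ (by omega), Nat.div_eq_of_lt hx, zero_add]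

theorem digitSum_pow (hb : 1 < b) (i : ℕ) : digitSum b (b ^ i) = 1 := by
  induction i with
  | zero => simpa [digitSum] using digitSum_add_mul hb hb 0
  | succ i ih => simpa [pow_succ', ih] using digitSum_add_mul hb (by omega : 0 < b) (b ^ i)

theorem digitSum_add_sub_one_mul_sum_div_pow (hb : 1 < b) {K n : ℕ} (hn : n < b ^ K) :
    digitSum b n + (b - 1) * ∑ i ∈ range K, n / b ^ (i + 1) = n := by
  induction K generalizing n with
  | zero => simp_all [digitSum]
  | succ K ih =>
    have hdiv : ∀ i, n / b ^ (i + 1 + 1) = n / b / b ^ (i + 1) := fun i => by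
      rw [Nat.div_div_eq_div_mul, ← pow_succ']
    have := ih (n := n / b) (by rw [Nat.div_lt_iff_lt_mul (by omega), ← pow_succ]; exact hn)
    have hmod := Nat.mod_add_div n b
    rw [sum_range_succ', sum_congr rfl fun i _ => hdiv i, digitSum_eq_mod_add_digitSum_div hb,
      zero_add, pow_one]
    obtain ⟨c, rfl⟩ : ∃ c, b = c + 2 := ⟨b - 2, by omega⟩
    rw [show c + 2 - 1 = c + 1 by omega] at this ⊢
    nlinarith

theorem digitSum_add_le (hb : 1 < b) (x y : ℕ) :
    digitSum b (x + y) ≤ digitSum b x + digitSum b y := by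
  have hK : x + y < b ^ (x + y) := Nat.lt_pow_self hb
  have hx := digitSum_add_sub_one_mul_sum_div_pow hb (show x < b ^ (x + y) by omega)
  have hy := digitSum_add_sub_one_mul_sum_div_pow hb (show y < b ^ (x + y) by omega)
  have hxy := digitSum_add_sub_one_mul_sum_div_pow hb hK
  have hsum : ∑ i ∈ range (x + y), (x / b ^ (i + 1) + y / b ^ (i + 1))
      ≤ ∑ i ∈ range (x + y), (x + y) / b ^ (i + 1) :=
    sum_le_sum fun i _ => Nat.div_add_div_le_add_div
  rw [sum_add_distrib] at hsum
  have := Nat.mul_le_mul_left (b - 1) hsum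
  rw [mul_add] at this
  omega

theorem digitSum_base_mul_sub_one (hb : 1 < b) {y : ℕ} (hy : 1 ≤ y) :
    digitSum b (b * y - 1) = (b - 1) + digitSum b (y - 1) := by
  rw [← digitSum_add_mul hb (by omega : b - 1 < b)]
  congr 1
  obtain ⟨y, rfl⟩ : ∃ z, y = z + 1 := ⟨y - 1, by omega⟩
  simp only [Nat.add_sub_cancel, mul_add]
  omega

theorem digitSum_sum_mul_pow (hb : 1 < b) {m : ℕ} {t : ℕ → ℕ} (ht : ∀ j < m, t j < b) :
    digitSum b (∑ j ∈ range m, t j * b ^ j) = ∑ j ∈ range m, t j := by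
  induction m generalizing t with
  | zero => simp [digitSum]
  | succ m ih =>
    rw [sum_range_succ_mul_pow, digitSum_add_mul hb (ht 0 (by omega)),
      ih fun j hj => ht (j + 1) (by omega), sum_range_succ' t, add_comm]

end DigitSum

def repunit (b j : ℕ) : ℕ := ∑ k ∈ range j, b ^ k

/-- Digit strings of greedy expansions in the numeration system with weights `repunit b j`. -/
def IsGreedyDigits (b : ℕ) (t : ℕ → ℕ) : Prop :=
  (∀ j, t j ≤ b) ∧ ∀ j, t j = b → ∀ i < j, t i = 0

section Repunit

variable {b : ℕ}

theorem sub_one_mul_repunit_add_one (hb : 1 ≤ b) (j : ℕ) :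
    (b - 1) * repunit b j + 1 = b ^ j := by
  have := geom_sum_mul_add (b - 1) j
  rw [Nat.sub_add_cancel hb] at this
  rw [repunit, mul_comm, this]

theorem repunit_succ (b j : ℕ) : repunit b (j + 1) = b * repunit b j + 1 := by
  rw [repunit, repunit, sum_range_succ', mul_sum]
  simp [pow_succ']

theorem one_le_repunit {j : ℕ} (hj : 1 ≤ j) : 1 ≤ repunit b j := by
  obtain ⟨j, rfl⟩ : ∃ i, j = i + 1 := ⟨j - 1, by omega⟩
  rw [repunit_succ]
  omega

theorem sub_one_mul_sum_repunit_add_sum (hb : 1 ≤ b) (s : Finset ℕ) (t : ℕ → ℕ) :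
    (b - 1) * ∑ j ∈ s, t j * repunit b j + ∑ j ∈ s, t j = ∑ j ∈ s, t j * b ^ j := by
  rw [mul_sum, ← sum_add_distrib]
  refine sum_congr rfl fun j _ => ?_
  rw [← sub_one_mul_repunit_add_one hb j]
  ring

theorem IsGreedyDigits.shift {t : ℕ → ℕ} (ht : IsGreedyDigits b t) :
    IsGreedyDigits b fun j => t (j + 1) :=
  ⟨fun _ => ht.1 _, fun j hj i hi => ht.2 _ hj _ (by omega)⟩

theorem IsGreedyDigits.update {t : ℕ → ℕ} {m q : ℕ} (ht : IsGreedyDigits b t) (hb : 0 < b)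
    (htop : ∀ j > m, t j = 0) (hq : q ≤ b) (hqb : q = b → ∀ i ≤ m, t i = 0) :
    IsGreedyDigits b (Function.update t (m + 1) q) := by
  refine ⟨fun j => ?_, fun j hj i hij => ?_⟩
  · rcases eq_or_ne j (m + 1) with rfl | hjm
    · simpa using hq
    · simpa [hjm] using ht.1 j
  · rcases eq_or_ne j (m + 1) with rfl | hjm
    · rw [Function.update_self] at hj
      rw [Function.update_of_ne (by omega)]
      exact hqb hj i (by omega)
    · rw [Function.update_of_ne hjm] at hj
      have : j ≤ m := by
        by_contra h
        rw [htop j (by omega)] at hj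
        omega
      rw [Function.update_of_ne (by omega)]
      exact ht.2 j hj i hij

theorem IsGreedyDigits.sum_le_digitSum_base_mul_sub_one (hb : 1 < b) {m : ℕ} {t : ℕ → ℕ}
    (ht : IsGreedyDigits b t) (hT : 1 ≤ ∑ j ∈ range m, t j) :
    ∑ j ∈ range m, t j ≤ digitSum b (b * (∑ j ∈ range m, t j * b ^ j) - 1) := by
  induction m generalizing t with
  | zero => simp at hT
  | succ m ih =>
    have hY := hT.trans (sum_le_sum_mul_pow (b := b) (by omega) (range (m + 1)) t)
    rw [digitSum_base_mul_sub_one hb hY, sum_range_succ_mul_pow, sum_range_succ']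
    rw [sum_range_succ_mul_pow] at hY
    rw [sum_range_succ'] at hT
    rcases Nat.eq_zero_or_pos (t 0) with h0 | h0
    · rw [h0, zero_add] at hY ⊢
      have := ih ht.shift (by omega)
      omega
    · -- a nonzero lowest digit rules out a digit `b` above it
      have hlow : ∀ j < m, t (j + 1) < b := fun j _ =>
        lt_of_le_of_ne (ht.1 _) fun h => by have := ht.2 _ h 0 (by omega); omega
      rw [show t 0 + b * (∑ j ∈ range m, t (j + 1) * b ^ j) - 1
          = (t 0 - 1) + b * ∑ j ∈ range m, t (j + 1) * b ^ j by omega,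
        digitSum_add_mul hb (by have := ht.1 0; omega), digitSum_sum_mul_pow hb hlow]
      omega

theorem IsGreedyDigits.sum_le_digitSum (hb : 1 < b) {m : ℕ} {t : ℕ → ℕ}
    (ht : IsGreedyDigits b t) (hT : 1 ≤ ∑ j ∈ Icc 1 m, t j) :
    ∑ j ∈ Icc 1 m, t j ≤
      digitSum b ((b - 1) * ∑ j ∈ Icc 1 m, t j * repunit b j + ∑ j ∈ Icc 1 m, t j - 1) := by
  rw [sub_one_mul_sum_repunit_add_sum hb.le, sum_Icc_one_eq_sum_range,
    sum_Icc_one_eq_sum_range]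
  rw [sum_Icc_one_eq_sum_range] at hT
  convert ht.shift.sum_le_digitSum_base_mul_sub_one hb hT using 3
  rw [mul_sum]
  exact sum_congr rfl fun j _ => by ring

theorem IsGreedyDigits.sum_mul_repunit_lt {t : ℕ → ℕ} (ht : IsGreedyDigits b t) (m : ℕ) :
    ∑ j ∈ Icc 1 m, t j * repunit b j < repunit b (m + 1) := by
  induction m with
  | zero => simp [repunit]
  | succ m ih =>
    rw [sum_Icc_succ_top (by omega), repunit_succ b (m + 1)]
    by_cases htop : t (m + 1) = b
    · have hlow : ∑ j ∈ Icc 1 m, t j * repunit b j = 0 :=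
        sum_eq_zero fun j hj => by rw [ht.2 _ htop j (by simp at hj; omega), zero_mul]
      rw [hlow, htop]
      omega
    · have := Nat.mul_le_mul_right (repunit b (m + 1))
        (show t (m + 1) + 1 ≤ b from lt_of_le_of_ne (ht.1 _) htop)
      rw [add_mul] at this
      omega

theorem exists_isGreedyDigits (hb : 1 ≤ b) (m : ℕ) {u : ℕ} (hu : u < repunit b (m + 1)) :
    ∃ t, IsGreedyDigits b t ∧ (∀ j ∉ Icc 1 m, t j = 0) ∧
      ∑ j ∈ Icc 1 m, t j * repunit b j = u := by
  induction m generalizing u with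
  | zero =>
    refine ⟨0, ⟨fun _ => Nat.zero_le _, fun _ _ _ _ => rfl⟩, fun _ _ => rfl, ?_⟩
    simp_all [repunit]
  | succ m ih =>
    rw [repunit_succ] at hu
    set R := repunit b (m + 1)
    have hR : 0 < R := one_le_repunit (by omega)
    obtain ⟨t, ht, hsupp, hsum⟩ := ih (Nat.mod_lt u hR)
    have hq : u / R ≤ b := Nat.div_le_of_le_mul (by rw [mul_comm]; omega)
    have hqb : u / R = b → ∀ i ≤ m, t i = 0 := fun hqb i _ => by
      have hr : u % R = 0 := by
        have := Nat.div_add_mod' u R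
        rw [hqb] at this
        omega
      rw [hr, sum_eq_zero_iff] at hsum
      by_cases hi : i ∈ Icc 1 m
      · have := one_le_repunit (b := b) (mem_Icc.1 hi).1
        exact (Nat.mul_eq_zero.1 (hsum i hi)).resolve_right (by omega)
      · exact hsupp i hi
    refine ⟨Function.update t (m + 1) (u / R),
      ht.update hb (fun j hj => hsupp j (by simp; omega)) hq hqb, fun j hj => ?_, ?_⟩
    · rw [Function.update_of_ne (by simp at hj; omega)]
      exact hsupp j (by simp at hj ⊢; omega)
    · rw [sum_Icc_succ_top (by omega), Function.update_self,
        sum_congr rfl fun j hj => by rw [Function.update_of_ne (by simp at hj; omega)], hsum]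
      exact Nat.mod_add_div' u R

end Repunit

section Thabit

variable {b n : ℕ}

theorem thabit_sub_one_eq (hb : 1 ≤ b) (n : ℕ) :
    (b + 1) * b ^ n - 1 = (b - 1) * repunit b n + (b - 1) * repunit b (n + 1) + 1 := by
  have h1 := sub_one_mul_repunit_add_one hb n
  have h2 := sub_one_mul_repunit_add_one hb (n + 1)
  have h3 : (b + 1) * b ^ n = b ^ (n + 1) + b ^ n := by ring
  omega

theorem thabit_generator_eq (hb : 1 ≤ b) (n j : ℕ) :
    (b + 1) * b ^ (n + j) - 1
      = (b - 1) * ((b + 1) * b ^ n) * repunit b j + ((b + 1) * b ^ n - 1) := by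
  have hN : 1 ≤ (b + 1) * b ^ n := Nat.one_le_iff_ne_zero.2 (by positivity)
  have : (b + 1) * b ^ (n + j) = (b - 1) * ((b + 1) * b ^ n) * repunit b j + (b + 1) * b ^ n := by
    rw [pow_add, ← sub_one_mul_repunit_add_one hb j]
    ring
  omega

theorem sum_mul_thabit_generator (hb : 1 ≤ b) (s : Finset ℕ) (t : ℕ → ℕ) :
    ∑ j ∈ s, t j * ((b + 1) * b ^ (n + j) - 1)
      = (b - 1) * ((b + 1) * b ^ n) * ∑ j ∈ s, t j * repunit b j
        + ((b + 1) * b ^ n - 1) * ∑ j ∈ s, t j := by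
  simp only [thabit_generator_eq hb n, mul_sum, ← sum_add_distrib]
  exact sum_congr rfl fun j _ => by ring

theorem thabit_generator_mem (b n j : ℕ) : (b + 1) * b ^ (n + j) - 1 ∈ thabitSemigroup b n :=
  AddSubmonoid.subset_closure ⟨j, rfl⟩

theorem sum_mul_thabit_generator_mem (s : Finset ℕ) (t : ℕ → ℕ) :
    ∑ j ∈ s, t j * ((b + 1) * b ^ (n + j) - 1) ∈ thabitSemigroup b n :=
  AddSubmonoid.sum_mem _ fun j _ => by
    simpa using AddSubmonoid.nsmul_mem _ (thabit_generator_mem b n j) (t j)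

theorem exists_of_mem_thabitSemigroup (hb : 1 < b) {v : ℕ} (hv : v ∈ thabitSemigroup b n) :
    ∃ U C, v = (b - 1) * ((b + 1) * b ^ n) * U + ((b + 1) * b ^ n - 1) * C ∧
      digitSum b ((b - 1) * U + C) ≤ C := by
  induction hv using AddSubmonoid.closure_induction with
  | mem v hv =>
    obtain ⟨j, rfl⟩ := hv
    refine ⟨repunit b j, 1, by rw [thabit_generator_eq hb.le, mul_one], ?_⟩
    rw [sub_one_mul_repunit_add_one hb.le, digitSum_pow hb]
  | zero => exact ⟨0, 0, by simp, by simp [digitSum]⟩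
  | add v w _ _ hv hw =>
    obtain ⟨U, C, rfl, hUC⟩ := hv
    obtain ⟨U', C', rfl, hUC'⟩ := hw
    refine ⟨U + U', C + C', by ring, ?_⟩
    calc digitSum b ((b - 1) * (U + U') + (C + C'))
        = digitSum b (((b - 1) * U + C) + ((b - 1) * U' + C')) := by ring_nf
      _ ≤ C + C' := (digitSum_add_le hb _ _).trans (add_le_add hUC hUC')

theorem coprime_thabit (hb : 1 ≤ b) (n : ℕ) :
    Nat.Coprime ((b - 1) * ((b + 1) * b ^ n)) ((b + 1) * b ^ n - 1) := by
  have hN : 1 ≤ (b + 1) * b ^ n := Nat.one_le_iff_ne_zero.2 (by positivity)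
  refine Nat.Coprime.mul_left ?_ ((Nat.coprime_self_sub_right hN).2 (Nat.coprime_one_right _))
  rw [thabit_sub_one_eq hb, add_comm, ← mul_add, mul_comm, Nat.coprime_add_mul_right_right]
  exact Nat.coprime_one_right _

end Thabit

section Rb

variable {b n : ℕ} {t : ℕ → ℕ}

theorem Rb.sum_mul_repunit_lt (hb : 2 ≤ b) (hn : 1 ≤ n) (ht : Rb b n t) :
    ∑ j ∈ Icc 1 (n + 1), t j * repunit b j < (b + 1) * b ^ n - 1 := by
  obtain ⟨hle, -, htop, hgreedy, hnext, hlow⟩ := ht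
  have hg : IsGreedyDigits b t := ⟨hle, hgreedy⟩
  obtain ⟨k, rfl⟩ : ∃ k, n = k + 1 := ⟨n - 1, by omega⟩
  have hL := hg.sum_mul_repunit_lt k
  have hLA := hg.sum_mul_repunit_lt (k + 1)
  have hB := repunit_succ b (k + 1)
  rw [sum_Icc_succ_top (by omega)] at hLA
  rw [thabit_sub_one_eq (by omega), sum_Icc_succ_top (by omega), sum_Icc_succ_top (by omega)]
  set A := repunit b (k + 1)
  set B := repunit b (k + 1 + 1)
  set L := ∑ j ∈ Icc 1 k, t j * repunit b j
  obtain ⟨c, rfl⟩ : ∃ c, b = c + 2 := ⟨b - 2, by omega⟩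
  simp only [show c + 2 - 1 = c + 1 by omega, show k + 1 - 1 = k by omega] at htop hnext hlow ⊢
  rcases Nat.lt_or_ge (t (k + 1 + 1)) (c + 1) with h2 | h2
  · nlinarith
  have h2 : t (k + 1 + 1) = c + 1 := by omega
  rcases Nat.lt_or_ge (t (k + 1)) (c + 1) with h1 | h1
  · nlinarith
  have h1 : t (k + 1) = c + 1 := by have := hnext h2; omega
  have hL0 : L = 0 := sum_eq_zero fun j hj => by
    rw [hlow h1 h2 j (mem_Icc.1 hj).1 (mem_Icc.1 hj).2, zero_mul]
  rw [hL0, h1, h2]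
  nlinarith

theorem rb_of_isGreedyDigits (hb : 2 ≤ b) (hn : 1 ≤ n) (hg : IsGreedyDigits b t)
    (hsupp : ∀ j ∉ Icc 1 (n + 1), t j = 0)
    (hV : ∑ j ∈ Icc 1 (n + 1), t j * repunit b j < (b + 1) * b ^ n - 1) : Rb b n t := by
  obtain ⟨k, rfl⟩ : ∃ k, n = k + 1 := ⟨n - 1, by omega⟩
  have hA : 1 ≤ repunit b (k + 1) := one_le_repunit (by omega)
  have hB := repunit_succ b (k + 1)
  rw [thabit_sub_one_eq (by omega), sum_Icc_succ_top (by omega), sum_Icc_succ_top (by omega)]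
    at hV
  set A := repunit b (k + 1)
  set B := repunit b (k + 1 + 1)
  set L := ∑ j ∈ Icc 1 k, t j * repunit b j
  obtain ⟨c, rfl⟩ : ∃ c, b = c + 2 := ⟨b - 2, by omega⟩
  simp only [Rb, show c + 2 - 1 = c + 1 by omega, show k + 1 - 1 = k by omega] at hV ⊢
  refine ⟨hg.1, hsupp, ?_, hg.2, fun h2 => ?_, fun h1 h2 i hi1 hik => ?_⟩
  · by_contra h2
    have h2 : t (k + 1 + 1) = c + 2 := by have := hg.1 (k + 1 + 1); omega
    rw [h2] at hV
    nlinarith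
  · by_contra h1
    have h1 : t (k + 1) = c + 2 := by have := hg.1 (k + 1); omega
    rw [h1, h2] at hV
    nlinarith
  · by_contra hi
    have hLi : t i * repunit (c + 2) i ≤ L :=
      single_le_sum (fun j _ => Nat.zero_le (t j * repunit (c + 2) j)) (mem_Icc.2 ⟨hi1, hik⟩)
    have := Nat.mul_le_mul (Nat.one_le_iff_ne_zero.2 hi) (one_le_repunit (b := c + 2) hi1)
    rw [h1, h2] at hV
    nlinarith

theorem rb_iff (hb : 2 ≤ b) (hn : 1 ≤ n) :
    Rb b n t ↔ IsGreedyDigits b t ∧ (∀ j ∉ Icc 1 (n + 1), t j = 0) ∧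
      ∑ j ∈ Icc 1 (n + 1), t j * repunit b j < (b + 1) * b ^ n - 1 :=
  ⟨fun ht => ⟨⟨ht.1, ht.2.2.2.1⟩, ht.2.1, ht.sum_mul_repunit_lt hb hn⟩,
    fun ⟨hg, hsupp, hV⟩ => rb_of_isGreedyDigits hb hn hg hsupp hV⟩

theorem mem_aperySet_of_rb (hb : 2 ≤ b) (hn : 1 ≤ n) (ht : Rb b n t) :
    ∑ j ∈ Icc 1 (n + 1), t j * ((b + 1) * b ^ (n + j) - 1)
      ∈ aperySet (thabitSemigroup b n) ((b + 1) * b ^ n - 1) := by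
  obtain ⟨hg, -, hV⟩ := (rb_iff hb hn).1 ht
  refine ⟨sum_mul_thabit_generator_mem _ t, ?_⟩
  rintro ⟨v, hv, hvw⟩
  obtain ⟨U, C, rfl, hUC⟩ := exists_of_mem_thabitSemigroup hb hv
  rw [sum_mul_thabit_generator (by omega)] at hvw
  set V := ∑ j ∈ Icc 1 (n + 1), t j * repunit b j
  set T := ∑ j ∈ Icc 1 (n + 1), t j
  have hTV : T ≤ V :=
    sum_le_sum fun j hj => Nat.le_mul_of_pos_right _ (one_le_repunit (mem_Icc.1 hj).1)
  have hN : 1 ≤ (b + 1) * b ^ n := Nat.one_le_iff_ne_zero.2 (by positivity)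
  have ha : (b + 1) * b ^ n ≤ (b - 1) * ((b + 1) * b ^ n) := Nat.le_mul_of_pos_left _ (by omega)
  obtain ⟨rfl, hCT⟩ := eq_and_eq_of_mul_add_mul_eq (coprime_thabit (by omega) n) hV (by omega)
    (show _ * U + _ * (C + 1) = _ * V + _ * T by rw [← hvw]; ring)
  have := hg.sum_le_digitSum hb (m := n + 1) (by omega)
  rw [show (b - 1) * V + T - 1 = (b - 1) * V + C by omega] at this
  omega

end Rb

theorem thabit_apery_set (n b : ℕ) (hn : 1 ≤ n) (hb : 2 ≤ b) :
    {s : ℕ | s ∈ thabitSemigroup b n ∧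
        ¬ ∃ t ∈ thabitSemigroup b n, t + ((b + 1) * b ^ n - 1) = s}
      = {x : ℕ | ∃ t : ℕ → ℕ, Rb b n t ∧
          x = ∑ j ∈ Finset.Icc 1 (n + 1), t j * ((b + 1) * b ^ (n + j) - 1)} := by
  change aperySet (thabitSemigroup b n) ((b + 1) * b ^ n - 1) = _
  ext s
  refine ⟨fun hs => ?_, fun ⟨t, ht, hs⟩ => hs ▸ mem_aperySet_of_rb hb hn ht⟩
  have hs0 : (b + 1) * b ^ n - 1 < repunit b (n + 2) := by
    rw [repunit, sum_range_succ, sum_range_succ]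
    have : (b + 1) * b ^ n = b ^ n + b ^ (n + 1) := by ring
    have : 0 < b ^ n := by positivity
    omega
  have hpos : 0 < (b + 1) * b ^ n - 1 := by
    have := Nat.mul_le_mul (show 3 ≤ b + 1 by omega) (Nat.one_le_pow n b (by omega))
    omega
  obtain ⟨u, hu, hus⟩ := exists_lt_mul_modEq (coprime_thabit (one_le_two.trans hb) n) hpos s
  obtain ⟨t, hg, hsupp, rfl⟩ := exists_isGreedyDigits (by omega) (n + 1) (hu.trans hs0)
  have ht : Rb b n t := (rb_iff hb hn).2 ⟨hg, hsupp, hu⟩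
  refine ⟨t, ht, eq_of_mem_aperySet_of_modEq (by simpa using thabit_generator_mem b n 0) hs
    (mem_aperySet_of_rb hb hn ht) (hus.symm.trans ?_)⟩
  rw [sum_mul_thabit_generator (by omega), Nat.ModEq, Nat.add_mul_mod_self_left]
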